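/- arXiv:1310.5444 — 3 statements merged into one kernel-verified Lean document; each statement's English description precedes it below -/
import Mathlib

section
/- Let 1 < p < ∞ and let w be an A_p weight on ℝ², with dual weight w⋆ := w^{−1/(p−1)}. Then for every measurable f : ℝ² → [0,∞) and every x ∈ ℝ², the pointwise bound M^D(f·w⋆)(x) ≤ [w]_{A_p}^{1/(p−1)} · ( M^D_w( (M^D_{w⋆} f)^{p/p'} · w^{−1} )(x) )^{p'/p} holds, where p' = p/(p−1). -/
open MeasureTheory ENNReal

noncomputable section

abbrev R2 := EuclideanSpace ℝ (Fin 2)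

/-- Euclidean balls and (half-open) axis-parallel squares in ℝ². -/
def IsBallOrSquare (B : Set R2) : Prop :=
  (∃ c : R2, ∃ r : ℝ, 0 < r ∧ B = Metric.ball c r) ∨
  (∃ (a : Fin 2 → ℝ) (s : ℝ), 0 < s ∧ B = {x : R2 | ∀ i, a i ≤ x i ∧ x i < a i + s})

/-- The `A_p` characteristic of a weight `w`. -/
def ApConst (p : ℝ) (w : R2 → ℝ) : ℝ≥0∞ :=
  (⨆ (B : Set R2) (_ : IsBallOrSquare B),
      ((∫⁻ x in B, ENNReal.ofReal (w x)) ^ (1 / p) *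
        (∫⁻ x in B, ENNReal.ofReal (w x ^ (-(1 / (p - 1))))) ^ (1 - 1 / p)) /
        volume B) ^ p

/-- The dyadic cube `[2^k m₁, 2^k (m₁+1)) × [2^k m₂, 2^k (m₂+1))` in ℝ². -/
def dyadicCube (k : ℤ) (m : Fin 2 → ℤ) : Set R2 :=
  {x : R2 | ∀ i, (2 : ℝ) ^ k * (m i : ℝ) ≤ x i ∧ x i < (2 : ℝ) ^ k * ((m i : ℝ) + 1)}

/-- Dyadic maximal function of an `ℝ≥0∞`-valued function. -/
def MDE (F : R2 → ℝ≥0∞) (x : R2) : ℝ≥0∞ :=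
  ⨆ (k : ℤ) (m : Fin 2 → ℤ) (_ : x ∈ dyadicCube k m),
    (volume (dyadicCube k m))⁻¹ * ∫⁻ y in dyadicCube k m, F y

/-- Weighted dyadic maximal function of an `ℝ≥0∞`-valued function. -/
def MDwE (w : R2 → ℝ) (F : R2 → ℝ≥0∞) (x : R2) : ℝ≥0∞ :=
  ⨆ (k : ℤ) (m : Fin 2 → ℤ) (_ : x ∈ dyadicCube k m),
    (∫⁻ y in dyadicCube k m, ENNReal.ofReal (w y))⁻¹ *
      ∫⁻ y in dyadicCube k m, F y * ENNReal.ofReal (w y)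

/-!
Fix a dyadic cube `Q ∋ x` and write `σ = w⋆`. The `σ`-average of `f` over `Q` bounds
`M^D_σ f` from below on all of `Q`, so the `w`-average over `Q` of `(M^D_σ f)^{p-1} w⁻¹` is at
least `|Q| (σ(Q)⁻¹ ∫_Q f σ)^{p-1} / w(Q)`. Raising this to the power `1/(p-1) = p'/p`, the
`A_p` condition `w(Q) σ(Q)^{p-1} ≤ [w]_{A_p} |Q|^p` on `Q` turns it into a bound for
`|Q|⁻¹ ∫_Q f σ`.
-/

lemma dyadicCube_eq_preimage (k : ℤ) (m : Fin 2 → ℤ) :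
    dyadicCube k m = (MeasurableEquiv.toLp 2 (Fin 2 → ℝ)).symm ⁻¹'
      Set.univ.pi fun i => Set.Ico ((2 : ℝ) ^ k * m i) ((2 : ℝ) ^ k * (m i + 1)) := by
  ext x
  simp [dyadicCube, Set.mem_pi, MeasurableEquiv.toLp_symm_apply]

lemma measurableSet_dyadicCube (k : ℤ) (m : Fin 2 → ℤ) : MeasurableSet (dyadicCube k m) := by
  rw [dyadicCube_eq_preimage]
  exact (MeasurableEquiv.toLp 2 (Fin 2 → ℝ)).symm.measurable
    (MeasurableSet.univ_pi fun _ => measurableSet_Ico)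

lemma volume_dyadicCube (k : ℤ) (m : Fin 2 → ℤ) :
    volume (dyadicCube k m) = ENNReal.ofReal ((2 : ℝ) ^ k) ^ 2 := by
  rw [dyadicCube_eq_preimage,
    (EuclideanSpace.volume_preserving_symm_measurableEquiv_toLp (Fin 2)).measure_preimage
      (MeasurableSet.univ_pi fun _ => measurableSet_Ico).nullMeasurableSet]
  simp only [volume_pi_pi, Real.volume_Ico, mul_add, mul_one, add_sub_cancel_left]
  simp

lemma volume_dyadicCube_ne_zero (k : ℤ) (m : Fin 2 → ℤ) : volume (dyadicCube k m) ≠ 0 := by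
  rw [volume_dyadicCube]
  have : (0 : ℝ) < 2 ^ k := zpow_pos two_pos k
  positivity

lemma isBounded_dyadicCube (k : ℤ) (m : Fin 2 → ℤ) : Bornology.IsBounded (dyadicCube k m) := by
  rw [dyadicCube_eq_preimage]
  exact (PiLp.antilipschitzWith_ofLp 2 _).isBounded_preimage
    (Bornology.IsBounded.pi fun _ => Metric.isBounded_Ico _ _)

lemma isBallOrSquare_dyadicCube (k : ℤ) (m : Fin 2 → ℤ) : IsBallOrSquare (dyadicCube k m) :=
  Or.inr ⟨fun i => 2 ^ k * m i, 2 ^ k, zpow_pos two_pos k,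
    by simp only [dyadicCube, mul_add, mul_one]⟩

lemma MeasureTheory.LocallyIntegrable.setLIntegral_ofReal_lt_top {X : Type*} [MetricSpace X]
    [ProperSpace X] [MeasurableSpace X] {μ : Measure X} {g : X → ℝ} (hg : LocallyIntegrable g μ) {s : Set X}
    (hs : Bornology.IsBounded s) : ∫⁻ x in s, ENNReal.ofReal (g x) ∂μ < ⊤ :=
  ((hg.integrableOn_isCompact hs.isCompact_closure).mono_set subset_closure).setLIntegral_lt_top

lemma setLIntegral_ofReal_pos {α : Type*} [MeasurableSpace α] {μ : Measure α} {g : α → ℝ}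
    {s : Set α} (hs : MeasurableSet s) (hg : AEMeasurable g (μ.restrict s))
    (hg0 : ∀ x ∈ s, 0 < g x) (hμs : μ s ≠ 0) : 0 < ∫⁻ x in s, ENNReal.ofReal (g x) ∂μ := by
  refine pos_iff_ne_zero.mpr fun h => hμs ?_
  rw [setLIntegral_eq_zero_iff' hs hg.ennreal_ofReal] at h
  rw [measure_eq_zero_iff_ae_notMem]
  filter_upwards [h] with x hx hxs
  exact (ENNReal.ofReal_pos.mpr (hg0 x hxs)).ne' (hx hxs)

lemma lintegral_mul_rpow_le_apConst {p : ℝ} (hp : 0 < p) {w : R2 → ℝ} {B : Set R2}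
    (hB : IsBallOrSquare B) (hB0 : volume B ≠ 0) (hBt : volume B ≠ ⊤) :
    (∫⁻ x in B, ENNReal.ofReal (w x)) *
        (∫⁻ x in B, ENNReal.ofReal (w x ^ (-(1 / (p - 1))))) ^ (p - 1) ≤
      ApConst p w * volume B ^ p := by
  set W := ∫⁻ x in B, ENNReal.ofReal (w x)
  set S := ∫⁻ x in B, ENNReal.ofReal (w x ^ (-(1 / (p - 1))))
  have hB : W ^ (1 / p) * S ^ (1 - 1 / p) / volume B ≤ ApConst p w ^ (1 / p) := by
    rw [ApConst, ← ENNReal.rpow_mul, mul_one_div_cancel hp.ne', ENNReal.rpow_one]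
    exact le_iSup₂_of_le B hB le_rfl
  rw [ENNReal.div_le_iff hB0 hBt] at hB
  have := ENNReal.rpow_le_rpow hB hp.le
  rwa [ENNReal.mul_rpow_of_nonneg _ _ hp.le, ENNReal.mul_rpow_of_nonneg _ _ hp.le,
    ← ENNReal.rpow_mul, ← ENNReal.rpow_mul, ← ENNReal.rpow_mul, one_div_mul_cancel hp.ne',
    sub_mul, one_div_mul_cancel hp.ne', one_mul, ENNReal.rpow_one, ENNReal.rpow_one] at this

lemma le_MDwE_of_mem (w : R2 → ℝ) (F : R2 → ℝ≥0∞) {k : ℤ} {m : Fin 2 → ℤ} {y : R2}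
    (hy : y ∈ dyadicCube k m) :
    (∫⁻ z in dyadicCube k m, ENNReal.ofReal (w z))⁻¹ *
        ∫⁻ z in dyadicCube k m, F z * ENNReal.ofReal (w z) ≤ MDwE w F y :=
  le_iSup₂_of_le k m (le_iSup_of_le hy le_rfl)

lemma rpow_mul_volume_le_setLIntegral_MDwE {w σ : R2 → ℝ} (hw : ∀ y, 0 < w y)
    (F : R2 → ℝ≥0∞) {r : ℝ} (hr : 0 ≤ r) (k : ℤ) (m : Fin 2 → ℤ) :
    ((∫⁻ z in dyadicCube k m, ENNReal.ofReal (σ z))⁻¹ *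
        ∫⁻ z in dyadicCube k m, F z * ENNReal.ofReal (σ z)) ^ r * volume (dyadicCube k m) ≤
      ∫⁻ y in dyadicCube k m,
        MDwE σ F y ^ r * (ENNReal.ofReal (w y))⁻¹ * ENNReal.ofReal (w y) := by
  rw [← setLIntegral_const]
  refine setLIntegral_mono' (measurableSet_dyadicCube k m) fun y hy => ?_
  rw [mul_assoc, ENNReal.inv_mul_cancel (ENNReal.ofReal_pos.mpr (hw y)).ne' ofReal_ne_top,
    mul_one]
  exact ENNReal.rpow_le_rpow (le_MDwE_of_mem σ F hy) hr

lemma inv_mul_le_of_mul_rpow_le {p : ℝ} (hp : 1 < p) {C V W S A : ℝ≥0∞} (hV0 : V ≠ 0)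
    (hVt : V ≠ ⊤) (hW0 : W ≠ 0) (hWt : W ≠ ⊤) (hS0 : S ≠ 0) (hSt : S ≠ ⊤)
    (hWS : W * S ^ (p - 1) ≤ C * V ^ p) :
    V⁻¹ * A ≤ C ^ (1 / (p - 1)) * (W⁻¹ * ((S⁻¹ * A) ^ (p - 1) * V)) ^ (1 / (p - 1)) := by
  set q := 1 / (p - 1)
  have hq : 0 < q := one_div_pos.mpr (sub_pos.mpr hp)
  have hpq : (p - 1) * q = 1 := mul_one_div_cancel (sub_pos.mpr hp).ne'
  have hWSq : W ^ q * S ≤ C ^ q * (V ^ q * V) := by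
    have := ENNReal.rpow_le_rpow hWS hq.le
    rwa [ENNReal.mul_rpow_of_nonneg _ _ hq.le, ENNReal.mul_rpow_of_nonneg _ _ hq.le,
      ← ENNReal.rpow_mul, hpq, ENNReal.rpow_one, ← ENNReal.rpow_mul,
      show p * q = q + 1 by linear_combination hpq, ENNReal.rpow_add _ _ hV0 hVt,
      ENNReal.rpow_one] at this
  have hWq0 : W ^ q ≠ 0 := (ENNReal.rpow_pos (pos_iff_ne_zero.mpr hW0) hWt).ne'
  have hWqt : W ^ q ≠ ⊤ := ENNReal.rpow_ne_top_of_nonneg hq.le hWt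
  have hRHS : C ^ q * (W⁻¹ * ((S⁻¹ * A) ^ (p - 1) * V)) ^ q =
      C ^ q * V ^ q / (W ^ q * S) * A := by
    rw [ENNReal.mul_rpow_of_nonneg _ _ hq.le, ENNReal.mul_rpow_of_nonneg _ _ hq.le,
      ENNReal.inv_rpow, ← ENNReal.rpow_mul, hpq, ENNReal.rpow_one, div_eq_mul_inv,
      ENNReal.mul_inv (Or.inl hWq0) (Or.inl hWqt)]
    ring
  rw [hRHS]
  gcongr
  rw [ENNReal.le_div_iff_mul_le (Or.inl (mul_ne_zero hWq0 hS0)) (Or.inl (mul_ne_top hWqt hSt))]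
  calc V⁻¹ * (W ^ q * S) ≤ V⁻¹ * (C ^ q * (V ^ q * V)) := by gcongr
    _ = C ^ q * V ^ q * (V⁻¹ * V) := by ring
    _ = C ^ q * V ^ q := by rw [ENNReal.inv_mul_cancel hV0 hVt, mul_one]

theorem stmt3_general (p : ℝ) (hp : 1 < p)
    (w : R2 → ℝ) (hw : ∀ x, 0 < w x)
    (hwloc : LocallyIntegrable w volume)
    (hwsloc : LocallyIntegrable (fun x => w x ^ (-(1 / (p - 1)))) volume)
    (f : R2 → ℝ) (x : R2) :
    MDE (fun y => ENNReal.ofReal (f y) * ENNReal.ofReal (w y ^ (-(1 / (p - 1))))) x ≤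
      ApConst p w ^ (1 / (p - 1)) *
        (MDwE w
          (fun y =>
            (MDwE (fun z => w z ^ (-(1 / (p - 1)))) (fun z => ENNReal.ofReal (f z)) y) ^
                (p / (p / (p - 1))) *
              (ENNReal.ofReal (w y))⁻¹) x) ^ ((p / (p - 1)) / p) := by
  have hp1 : 0 < p - 1 := sub_pos.mpr hp
  rw [show p / (p / (p - 1)) = p - 1 by field_simp,
    show p / (p - 1) / p = 1 / (p - 1) by field_simp]
  refine iSup_le fun k => iSup₂_le fun m hx => ?_
  have hQ := measurableSet_dyadicCube k m
  have hQ0 := volume_dyadicCube_ne_zero k m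
  have hQb := isBounded_dyadicCube k m
  have hσ : ∀ y, 0 < w y ^ (-(1 / (p - 1))) := fun y => Real.rpow_pos_of_pos (hw y) _
  have hW0 := setLIntegral_ofReal_pos hQ hwloc.aestronglyMeasurable.aemeasurable.restrict
    (fun y _ => hw y) hQ0
  have hS0 := setLIntegral_ofReal_pos hQ hwsloc.aestronglyMeasurable.aemeasurable.restrict
    (fun y _ => hσ y) hQ0
  have hApQ := lintegral_mul_rpow_le_apConst (w := w) (by linarith)
    (isBallOrSquare_dyadicCube k m) hQ0 hQb.measure_lt_top.ne
  calc _ ≤ ApConst p w ^ (1 / (p - 1)) *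
        (_ * (_ ^ (p - 1) * volume (dyadicCube k m))) ^ (1 / (p - 1)) :=
      inv_mul_le_of_mul_rpow_le hp hQ0 hQb.measure_lt_top.ne hW0.ne'
        (hwloc.setLIntegral_ofReal_lt_top hQb).ne hS0.ne'
        (hwsloc.setLIntegral_ofReal_lt_top hQb).ne hApQ
    _ ≤ _ := by
      gcongr
      calc _ ≤ _ := by gcongr; exact rpow_mul_volume_le_setLIntegral_MDwE hw _ hp1.le k m
        _ ≤ _ := le_MDwE_of_mem w _ hx

/-- Pointwise bound: `M^D (f w⋆) ≤ [w]_{A_p}^{1/(p-1)} ( M^D_w ((M^D_{w⋆} f)^{p/p'} w⁻¹) )^{p'/p}`,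
where `w⋆ = w^{-1/(p-1)}` and `p' = p/(p-1)`. -/
theorem stmt3 (p : ℝ) (hp : 1 < p)
    (w : R2 → ℝ) (hw : ∀ x, 0 < w x)
    (hwloc : LocallyIntegrable w volume)
    (hwsloc : LocallyIntegrable (fun x => w x ^ (-(1 / (p - 1)))) volume)
    (hAp : ApConst p w ≠ ⊤)
    (f : R2 → ℝ) (hf : Measurable f) (hf0 : ∀ x, 0 ≤ f x) (x : R2) :
    MDE (fun y => ENNReal.ofReal (f y) * ENNReal.ofReal (w y ^ (-(1 / (p - 1))))) x ≤
      ApConst p w ^ (1 / (p - 1)) *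
        (MDwE w
          (fun y =>
            (MDwE (fun z => w z ^ (-(1 / (p - 1)))) (fun z => ENNReal.ofReal (f z)) y) ^
                (p / (p / (p - 1))) *
              (ENNReal.ofReal (w y))⁻¹) x) ^ ((p / (p - 1)) / p) :=
  stmt3_general p hp w hw hwloc hwsloc f x
end
end

section
/- There is an absolute constant C such that for every 1 < p < ∞ and every 0 < δ < 1, the power weight w(x) := |x|^{2δ(p−1)} on ℝ² satisfies [w]_{A_p} ≤ C^p (1−δ)^{−(p−1)}; in particular [w]_{A_p}^{1/(p−1)} ≤ C²(1−δ)^{−1}. -/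
open MeasureTheory ENNReal

noncomputable section

/-!
The dual weight of `‖x‖ ^ (2δ(p-1))` is `‖x‖ ^ (-2δ)`, so it suffices to bound
`avg_B ‖x‖ ^ (2δ(p-1)) · (avg_B ‖x‖ ^ (-2δ)) ^ (p-1)` by `(C / (1-δ)) ^ (p-1)`.
Enclose `B` in a ball `ball c ρ` of comparable area. If `2ρ ≤ ‖c‖`, then `‖x‖` is
comparable to `‖c‖` on `B` and both averages are bounded by the corresponding powers of `‖c‖`.
Otherwise `B ⊆ ball 0 (3ρ)`, where polar coordinates give the exact mean
`(1-δ)⁻¹ (3ρ) ^ (-2δ)` of `‖x‖ ^ (-2δ)`, against `‖x‖ ^ (2δ(p-1)) ≤ (3ρ) ^ (2δ(p-1))`;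
the powers of `ρ` cancel.
-/

open Metric Set Module Real

section RadialPower

variable {E : Type*} [NormedAddCommGroup E] [NormedSpace ℝ E] [FiniteDimensional ℝ E]
  [MeasurableSpace E] [BorelSpace E] [Nontrivial E] (μ : Measure E) [μ.IsAddHaarMeasure]

theorem setIntegral_ball_zero_norm_rpow_neg {s : ℝ} (hs : s < finrank ℝ E) {R : ℝ}
    (hR : 0 < R) :
    ∫ x in ball (0 : E) R, ‖x‖ ^ (-s) ∂μ =
      finrank ℝ E * μ.real (ball 0 1) * (R ^ (finrank ℝ E - s) / (finrank ℝ E - s)) := by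
  have hd : 1 ≤ finrank ℝ E := finrank_pos
  have hradial :
      ∫ y in Ioi (0 : ℝ), y ^ (finrank ℝ E - 1) • (Iio R).indicator (· ^ (-s)) y =
        ∫ y in (0)..R, y ^ ((finrank ℝ E : ℝ) - 1 - s) := by
    rw [intervalIntegral.integral_of_le hR.le, integral_Ioc_eq_integral_Ioo,
      ← integral_indicator measurableSet_Ioi, ← integral_indicator measurableSet_Ioo]
    congr with y
    by_cases hy : 0 < y <;> by_cases hyR : y < R <;> simp [indicator, hy, hyR]
    rw [← Real.rpow_natCast, ← Real.rpow_add hy]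
    push_cast [hd]
    ring_nf
  rw [← integral_indicator measurableSet_ball]
  trans ∫ x, (Iio R).indicator (· ^ (-s)) ‖x‖ ∂μ
  · congr with x
    simp [indicator]
  rw [integral_fun_norm_addHaar, hradial, integral_rpow (.inl (by linarith)),
    Real.zero_rpow (by linarith), nsmul_eq_mul, smul_eq_mul, sub_zero,
    show (finrank ℝ E : ℝ) - 1 - s + 1 = finrank ℝ E - s by ring]
  ring

theorem setLIntegral_ball_zero_norm_rpow_neg {s : ℝ} (hs : s < finrank ℝ E) {R : ℝ}
    (hR : 0 < R) :
    ∫⁻ x in ball (0 : E) R, ENNReal.ofReal (‖x‖ ^ (-s)) ∂μ =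
      ENNReal.ofReal (finrank ℝ E / (finrank ℝ E - s) * R ^ (-s)) * μ (ball 0 R) := by
  have hint : IntegrableOn (fun x : E ↦ ‖x‖ ^ (-s)) (ball 0 R) μ :=
    integrableOn_ball_of_norm_le_rpow finrank_pos hs (C := 1)
      (.of_forall fun x ↦ by simp [abs_of_nonneg (Real.rpow_nonneg (norm_nonneg x) _)])
      (continuous_norm.measurable.pow_const _).aestronglyMeasurable
  rw [← ofReal_integral_eq_lintegral_ofReal hint (.of_forall fun x ↦ by positivity),
    setIntegral_ball_zero_norm_rpow_neg μ hs hR, Measure.addHaar_ball_of_pos μ 0 hR,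
    ← ofReal_measureReal measure_ball_lt_top.ne, ← ENNReal.ofReal_mul (by positivity),
    ← ENNReal.ofReal_mul
      (mul_nonneg (div_nonneg (by positivity) (by linarith)) (by positivity)),
    sub_eq_add_neg, Real.rpow_add hR, Real.rpow_natCast]
  ring_nf

theorem exists_setLIntegral_norm_rpow_neg_le {s : ℝ} (hs₀ : 0 ≤ s) (hs : s < finrank ℝ E)
    {B : Set E} {c : E} {ρ K : ℝ} (hρ : 0 < ρ) (hK : 1 ≤ K) (hBc : B ⊆ ball c ρ)
    (hvol : μ (ball c ρ) ≤ ENNReal.ofReal K * μ B) :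
    ∃ M > 0, (∀ x ∈ B, ‖x‖ ≤ M) ∧
      ∫⁻ x in B, ENNReal.ofReal (‖x‖ ^ (-s)) ∂μ ≤
        ENNReal.ofReal (3 ^ finrank ℝ E * (finrank ℝ E / (finrank ℝ E - s)) * K * M ^ (-s)) *
          μ B := by
  have hds : 0 < (finrank ℝ E : ℝ) - s := by linarith
  have hnorm : ∀ x ∈ B, |‖x‖ - ‖c‖| < ρ := fun x hx ↦
    (abs_norm_sub_norm_le x c).trans_lt (mem_ball_iff_norm.1 (hBc hx))
  rcases le_or_gt (2 * ρ) ‖c‖ with hc | hc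
  · have hc₀ : 0 < ‖c‖ := by linarith
    refine ⟨3 / 2 * ‖c‖, by positivity,
      fun x hx ↦ by linarith [(abs_lt.1 (hnorm x hx)).2], ?_⟩
    rw [← setLIntegral_const]
    refine setLIntegral_mono measurable_const fun x hx ↦ ENNReal.ofReal_le_ofReal ?_
    have hlow : ‖c‖ / 2 ≤ ‖x‖ := by linarith [(abs_lt.1 (hnorm x hx)).1]
    have hconst :
        (3 : ℝ) ^ s ≤ 3 ^ finrank ℝ E * (finrank ℝ E / (finrank ℝ E - s)) * K := by
      calc (3 : ℝ) ^ s ≤ 3 ^ (finrank ℝ E : ℝ) :=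
            Real.rpow_le_rpow_of_exponent_le (by norm_num) hs.le
        _ = 3 ^ finrank ℝ E * 1 * 1 := by rw [Real.rpow_natCast, mul_one, mul_one]
        _ ≤ _ := by
          gcongr
          rw [one_le_div hds]
          linarith
    calc ‖x‖ ^ (-s) ≤ (‖c‖ / 2) ^ (-s) :=
          Real.rpow_le_rpow_of_nonpos (by positivity) hlow (by linarith)
      _ = 3 ^ s * (3 / 2 * ‖c‖) ^ (-s) := by
        rw [show ‖c‖ / 2 = 3⁻¹ * (3 / 2 * ‖c‖) by ring,
          Real.mul_rpow (by norm_num) (by positivity), Real.inv_rpow (by norm_num),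
          Real.rpow_neg (by norm_num), inv_inv]
      _ ≤ _ := by gcongr
  · refine ⟨3 * ρ, by positivity, fun x hx ↦ by linarith [(abs_lt.1 (hnorm x hx)).2], ?_⟩
    have hB₀ : B ⊆ ball 0 (3 * ρ) := fun x hx ↦
      mem_ball_zero_iff.2 (by linarith [(abs_lt.1 (hnorm x hx)).2])
    calc ∫⁻ x in B, ENNReal.ofReal (‖x‖ ^ (-s)) ∂μ
        ≤ ∫⁻ x in ball 0 (3 * ρ), ENNReal.ofReal (‖x‖ ^ (-s)) ∂μ :=
          lintegral_mono_set hB₀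
      _ = ENNReal.ofReal (finrank ℝ E / (finrank ℝ E - s) * (3 * ρ) ^ (-s)) *
            (ENNReal.ofReal (3 ^ finrank ℝ E) * μ (ball c ρ)) := by
        rw [setLIntegral_ball_zero_norm_rpow_neg μ hs (by positivity),
          Measure.addHaar_ball_mul_of_pos μ 0 (by norm_num : (0 : ℝ) < 3),
          Measure.addHaar_ball_center μ c]
      _ ≤ ENNReal.ofReal (finrank ℝ E / (finrank ℝ E - s) * (3 * ρ) ^ (-s)) *
            (ENNReal.ofReal (3 ^ finrank ℝ E) * (ENNReal.ofReal K * μ B)) := by gcongr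
      _ = _ := by
        rw [← mul_assoc, ← mul_assoc, ← ENNReal.ofReal_mul (by positivity),
          ← ENNReal.ofReal_mul (by positivity)]
        ring_nf

end RadialPower

theorem ENNReal.rpow_mul_rpow_one_sub_div_le {θ : ℝ} (hθ₀ : 0 ≤ θ) (hθ₁ : θ ≤ 1)
    {V I J a b : ℝ≥0∞} (hV₀ : V ≠ 0) (hV : V ≠ ⊤) (hI : I ≤ a * V)
    (hJ : J ≤ b * V) :
    I ^ θ * J ^ (1 - θ) / V ≤ a ^ θ * b ^ (1 - θ) := by
  have h1θ : 0 ≤ 1 - θ := by linarith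
  calc I ^ θ * J ^ (1 - θ) / V ≤ (a * V) ^ θ * (b * V) ^ (1 - θ) / V := by gcongr
    _ = a ^ θ * b ^ (1 - θ) * (V ^ θ * V ^ (1 - θ) / V) := by
      rw [ENNReal.mul_rpow_of_nonneg _ _ hθ₀, ENNReal.mul_rpow_of_nonneg _ _ h1θ,
        mul_mul_mul_comm, mul_div_assoc]
    _ = a ^ θ * b ^ (1 - θ) := by
      rw [← ENNReal.rpow_add _ _ hV₀ hV, add_sub_cancel, ENNReal.rpow_one,
        ENNReal.div_self hV₀ hV, mul_one]

theorem volume_square (a : Fin 2 → ℝ) (s : ℝ) :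
    volume {x : R2 | ∀ i, a i ≤ x i ∧ x i < a i + s} = ENNReal.ofReal s ^ 2 := by
  have h : {x : R2 | ∀ i, a i ≤ x i ∧ x i < a i + s} =
      (MeasurableEquiv.toLp 2 (Fin 2 → ℝ)).symm ⁻¹'
        univ.pi fun i ↦ Ico (a i) (a i + s) := by
    ext x
    simp [mem_pi]
  rw [h, (EuclideanSpace.volume_preserving_symm_measurableEquiv_toLp (Fin 2)).measure_preimage
    (MeasurableSet.univ_pi fun i ↦ measurableSet_Ico).nullMeasurableSet, volume_pi_pi]
  simp [Real.volume_Ico, sq]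

namespace IsBallOrSquare

theorem volume_ne_zero {B : Set R2} (hB : IsBallOrSquare B) : volume B ≠ 0 := by
  rcases hB with ⟨c, r, hr, rfl⟩ | ⟨a, s, hs, rfl⟩
  · exact (measure_ball_pos volume c hr).ne'
  · rw [volume_square]
    exact pow_ne_zero _ (ENNReal.ofReal_pos.2 hs).ne'

theorem exists_ball_superset {B : Set R2} (hB : IsBallOrSquare B) :
    ∃ c ρ, 0 < ρ ∧ B ⊆ ball c ρ ∧
      volume (ball c ρ) ≤ ENNReal.ofReal (4 * π) * volume B := by
  rcases hB with ⟨c, r, hr, rfl⟩ | ⟨a, s, hs, rfl⟩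
  · exact ⟨c, r, hr, subset_rfl, le_mul_of_one_le_left' (ENNReal.one_le_ofReal.2 (by
      nlinarith [pi_gt_three]))⟩
  refine ⟨WithLp.toLp 2 a, 2 * s, by positivity, fun x hx ↦ ?_, ?_⟩
  · have hcoord : ∀ i, (x i - a i) ^ 2 < s ^ 2 := fun i ↦ by
      nlinarith [(hx i).1, (hx i).2]
    rw [mem_ball, EuclideanSpace.dist_eq, Real.sqrt_lt' (by positivity)]
    simp only [Real.dist_eq, sq_abs, Fin.sum_univ_two]
    nlinarith [hcoord 0, hcoord 1]
  · rw [EuclideanSpace.volume_ball_fin_two, volume_square, ← ENNReal.ofReal_pow (by positivity),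
      ← ENNReal.ofReal_pow hs.le, ← ENNReal.ofReal_mul (by positivity),
      ← ENNReal.ofReal_mul (by positivity)]
    exact ENNReal.ofReal_le_ofReal (le_of_eq (by ring))

theorem volume_ne_top {B : Set R2} (hB : IsBallOrSquare B) : volume B ≠ ⊤ := by
  obtain ⟨c, ρ, -, hBc, -⟩ := hB.exists_ball_superset
  exact ((measure_mono hBc).trans_lt measure_ball_lt_top).ne

end IsBallOrSquare

theorem ApConst_le_of_forall_isBallOrSquare {p : ℝ} (hp : 1 < p) {w : R2 → ℝ} {K : ℝ≥0∞}
    (h : ∀ B, IsBallOrSquare B → ∃ a b : ℝ≥0∞, a * b ^ (p - 1) ≤ K ∧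
      ∫⁻ x in B, ENNReal.ofReal (w x) ≤ a * volume B ∧
      ∫⁻ x in B, ENNReal.ofReal (w x ^ (-(1 / (p - 1)))) ≤ b * volume B) :
    ApConst p w ≤ K := by
  have hp₀ : 0 < p := by linarith
  have hinv : 1 / p ≤ 1 := (div_le_one hp₀).2 hp.le
  suffices hB : ∀ B, IsBallOrSquare B →
      ((∫⁻ x in B, ENNReal.ofReal (w x)) ^ (1 / p) *
        (∫⁻ x in B, ENNReal.ofReal (w x ^ (-(1 / (p - 1))))) ^ (1 - 1 / p)) / volume B ≤
        K ^ (1 / p) by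
    calc ApConst p w ≤ (K ^ (1 / p)) ^ p :=
          ENNReal.rpow_le_rpow (iSup₂_le hB) hp₀.le
      _ = K := by rw [one_div, ENNReal.rpow_inv_rpow hp₀.ne']
  intro B hB
  obtain ⟨a, b, hab, ha, hb⟩ := h B hB
  calc _ ≤ a ^ (1 / p) * b ^ (1 - 1 / p) :=
        ENNReal.rpow_mul_rpow_one_sub_div_le (by positivity) hinv hB.volume_ne_zero
          hB.volume_ne_top ha hb
    _ = (a * b ^ (p - 1)) ^ (1 / p) := by
        rw [ENNReal.mul_rpow_of_nonneg _ _ (by positivity), ← ENNReal.rpow_mul]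
        congr 2
        field_simp
    _ ≤ K ^ (1 / p) := ENNReal.rpow_le_rpow hab (by positivity)

theorem ApConst_norm_rpow_le {p δ : ℝ} (hp : 1 < p) (hδ₀ : 0 ≤ δ) (hδ₁ : δ < 1) :
    ApConst p (fun x : R2 ↦ ‖x‖ ^ (2 * δ * (p - 1))) ≤
      ENNReal.ofReal ((36 * π / (1 - δ)) ^ (p - 1)) := by
  have hp₁ : 0 < p - 1 := by linarith
  have hδ : 0 < 1 - δ := by linarith
  have hdual (x : R2) :
      (‖x‖ ^ (2 * δ * (p - 1))) ^ (-(1 / (p - 1))) = ‖x‖ ^ (-(2 * δ)) := by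
    rw [← Real.rpow_mul (norm_nonneg x)]
    congr 1
    field_simp
  have hd : finrank ℝ R2 = 2 := finrank_euclideanSpace_fin
  refine ApConst_le_of_forall_isBallOrSquare hp fun B hB ↦ ?_
  obtain ⟨c, ρ, hρ, hBc, hvol⟩ := hB.exists_ball_superset
  obtain ⟨M, hM, hBM, hint⟩ := exists_setLIntegral_norm_rpow_neg_le volume (s := 2 * δ)
    (by positivity) (by rw [hd]; push_cast; linarith) hρ (by nlinarith [pi_gt_three]) hBc hvol
  have hconst : 3 ^ finrank ℝ R2 * (finrank ℝ R2 / (finrank ℝ R2 - 2 * δ)) * (4 * π) =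
      36 * π / (1 - δ) := by
    rw [hd, Nat.cast_ofNat, show (2 : ℝ) - 2 * δ = 2 * (1 - δ) by ring]
    field_simp
    ring
  rw [hconst] at hint
  refine ⟨ENNReal.ofReal (M ^ (2 * δ * (p - 1))),
    ENNReal.ofReal (36 * π / (1 - δ) * M ^ (-(2 * δ))), ?_, ?_,
    by simpa only [hdual] using hint⟩
  · rw [ENNReal.ofReal_rpow_of_nonneg (by positivity) hp₁.le,
      ← ENNReal.ofReal_mul (by positivity), Real.mul_rpow (by positivity) (by positivity),
      ← Real.rpow_mul hM.le, mul_left_comm, ← Real.rpow_add hM,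
      show 2 * δ * (p - 1) + -(2 * δ) * (p - 1) = 0 by ring, Real.rpow_zero, mul_one]
  · rw [← setLIntegral_const]
    exact setLIntegral_mono measurable_const fun x hx ↦
      ENNReal.ofReal_le_ofReal (Real.rpow_le_rpow (norm_nonneg x) (hBM x hx) (by positivity))

/-- `A_p` characteristic of the power weight `|x|^{2δ(p-1)}`:
`[w]_{A_p} ≤ C^p (1-δ)^{-(p-1)}`, hence `[w]_{A_p}^{1/(p-1)} ≤ C² (1-δ)⁻¹`. -/
theorem stmt5 :
    ∃ C : ℝ, 0 < C ∧
      ∀ p : ℝ, 1 < p → ∀ δ : ℝ, 0 < δ → δ < 1 →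
        ApConst p (fun x : R2 => ‖x‖ ^ (2 * δ * (p - 1))) ≤
            ENNReal.ofReal (C ^ p * (1 - δ) ^ (-(p - 1))) ∧
          ApConst p (fun x : R2 => ‖x‖ ^ (2 * δ * (p - 1))) ^ (1 / (p - 1)) ≤
            ENNReal.ofReal (C ^ 2 * (1 - δ)⁻¹) := by
  have hC : 1 ≤ 36 * π := by nlinarith [pi_gt_three]
  refine ⟨36 * π, by positivity, fun p hp δ hδ₀ hδ₁ ↦ ?_⟩
  have hp₁ : 0 < p - 1 := by linarith
  have hδ : 0 < 1 - δ := by linarith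
  have hA := ApConst_norm_rpow_le hp hδ₀.le hδ₁
  constructor
  · refine hA.trans (ENNReal.ofReal_le_ofReal ?_)
    rw [Real.div_rpow (by positivity) hδ.le, Real.rpow_neg hδ.le, div_eq_mul_inv]
    exact mul_le_mul_of_nonneg_right (Real.rpow_le_rpow_of_exponent_le hC (by linarith))
      (by positivity)
  · calc _ ≤ ENNReal.ofReal ((36 * π / (1 - δ)) ^ (p - 1)) ^ (1 / (p - 1)) :=
          ENNReal.rpow_le_rpow hA (by positivity)
      _ = ENNReal.ofReal (36 * π / (1 - δ)) := by
        rw [ENNReal.ofReal_rpow_of_nonneg (by positivity) (by positivity), ← Real.rpow_mul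
          (by positivity), mul_one_div_cancel hp₁.ne', Real.rpow_one]
      _ ≤ ENNReal.ofReal ((36 * π) ^ 2 * (1 - δ)⁻¹) := by
        rw [div_eq_mul_inv]
        gcongr
        nlinarith
end
end

section
/- Let (X, μ) be a measure space, let φ : X → ℝ be measurable, and let C > 0, M ≥ 0, p₀ ≥ 1. Suppose that ∫_X |φ|^p dμ ≤ (Cp)^p M for every real p ≥ p₀. Then for every λ > e·p₀·C, μ({x ∈ X : |φ(x)| > λ}) ≤ M·exp(−λ/(eC)). -/
/-!
Markov's inequality applied to `|φ|^p` gives `μ{|φ| > λ} ≤ (Cp/λ)^p M` for every `p ≥ p₀`.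
The exponent `p = λ/(eC)` minimises `(Cp/λ)^p`, turning it into `e^{-p}`; the condition
`λ > e p₀ C` is exactly what makes this choice admissible.
-/

open MeasureTheory ENNReal

section Markov

variable {X : Type*} [MeasurableSpace X] {μ : Measure X} {φ : X → ℝ}

theorem ofReal_rpow_mul_meas_lt_abs_le_lintegral (hφ : AEMeasurable φ μ) (t : ℝ) {p : ℝ}
    (hp : 0 ≤ p) :
    ENNReal.ofReal t ^ p * μ {x | t < |φ x|} ≤ ∫⁻ x, (‖φ x‖₊ : ℝ≥0∞) ^ p ∂μ := by
  refine le_trans ?_ (mul_meas_ge_le_lintegral₀ (hφ.nnnorm.coe_nnreal_ennreal.pow_const p)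
    (ENNReal.ofReal t ^ p))
  gcongr with x
  intro hx
  refine ENNReal.rpow_le_rpow ?_ hp
  rw [← ENNReal.ofReal_coe_nnreal, coe_nnnorm, Real.norm_eq_abs]
  exact ENNReal.ofReal_le_ofReal hx.le

theorem meas_lt_abs_le_of_lintegral_rpow_le (hφ : AEMeasurable φ μ) {t p A : ℝ} (ht : 0 < t)
    (hp : 0 ≤ p) (hA : ∫⁻ x, (‖φ x‖₊ : ℝ≥0∞) ^ p ∂μ ≤ ENNReal.ofReal A) :
    μ {x | t < |φ x|} ≤ ENNReal.ofReal (A / t ^ p) := by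
  have htp : 0 < t ^ p := Real.rpow_pos_of_pos ht p
  rw [ENNReal.ofReal_div_of_pos htp, ENNReal.le_div_iff_mul_le (.inl (by simpa using htp))
    (.inl (by simp)), mul_comm, ← ENNReal.ofReal_rpow_of_pos ht]
  exact (ofReal_rpow_mul_meas_lt_abs_le_lintegral hφ t hp).trans hA

end Markov

theorem Real.div_exp_one_rpow {a : ℝ} (ha : 0 ≤ a) (p : ℝ) :
    (a / Real.exp 1) ^ p = a ^ p * Real.exp (-p) := by
  rw [Real.div_rpow ha (Real.exp_pos 1).le, Real.exp_one_rpow, Real.exp_neg, div_eq_mul_inv]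

theorem stmt13_general {X : Type*} [MeasurableSpace X] (μ : Measure X)
    (φ : X → ℝ) (hφ : Measurable φ)
    (C M p₀ : ℝ) (hC : 0 < C) (hp₀ : 1 ≤ p₀)
    (h : ∀ p : ℝ, p₀ ≤ p →
      (∫⁻ x, (‖φ x‖₊ : ℝ≥0∞) ^ p ∂μ) ≤ ENNReal.ofReal ((C * p) ^ p * M)) :
    ∀ lam : ℝ, Real.exp 1 * p₀ * C < lam →
      μ {x | lam < |φ x|} ≤
        ENNReal.ofReal (M * Real.exp (-lam / (Real.exp 1 * C))) := by
  intro lam hlam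
  have heC : 0 < Real.exp 1 * C := by positivity
  have hlam_pos : 0 < lam := lt_trans (by positivity) hlam
  set p := lam / (Real.exp 1 * C) with hp
  have hp₀p : p₀ ≤ p := by
    rw [hp, le_div_iff₀ heC]
    linarith
  have hCp : C * p = lam / Real.exp 1 := by
    rw [hp]
    field_simp
  have hbound : (C * p) ^ p * M / lam ^ p = M * Real.exp (-lam / (Real.exp 1 * C)) := by
    rw [hCp, Real.div_exp_one_rpow hlam_pos.le, neg_div, ← hp]
    field_simp [(Real.rpow_pos_of_pos hlam_pos p).ne']
  rw [← hbound]
  exact meas_lt_abs_le_of_lintegral_rpow_le hφ.aemeasurable hlam_pos (by linarith) (h p hp₀p)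

/-- If `∫ |φ|^p dμ ≤ (Cp)^p M` for all `p ≥ p₀`, then `φ` has exponential distribution
decay: `μ({|φ| > λ}) ≤ M exp(−λ/(eC))` for `λ > e p₀ C`. -/
theorem stmt13 {X : Type*} [MeasurableSpace X] (μ : Measure X)
    (φ : X → ℝ) (hφ : Measurable φ)
    (C M p₀ : ℝ) (hC : 0 < C) (hM : 0 ≤ M) (hp₀ : 1 ≤ p₀)
    (h : ∀ p : ℝ, p₀ ≤ p →
      (∫⁻ x, (‖φ x‖₊ : ℝ≥0∞) ^ p ∂μ) ≤ ENNReal.ofReal ((C * p) ^ p * M)) :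
    ∀ lam : ℝ, Real.exp 1 * p₀ * C < lam →
      μ {x | lam < |φ x|} ≤
        ENNReal.ofReal (M * Real.exp (-lam / (Real.exp 1 * C))) :=
  stmt13_general μ φ hφ C M p₀ hC hp₀ h
end
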